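/- arXiv:1512.06027 — 3 statements merged into one kernel-verified Lean document; each statement's English description precedes it below -/
import Mathlib

section
/- Let $n \in \mathbb{R}^{d+1}$ be a unit vector such that the hyperplane $\Sigma_0 = \{x : x \cdot n = 0\}$ contains no nonzero point of $\mathbb{Z}^{d+1}$ (an 'irrational direction'). Then for every $\rho > 0$ there exists $R_\rho > 0$ such that for every $z \in \Sigma_0$ there exists $\tau \in \Sigma_0$ with $|\tau - z| \leq R_\rho$ and $\mathrm{dist}(\tau, \mathbb{Z}^{d+1}) \leq \rho$. -/
open scoped RealInnerProductSpace

/-! The heights `⟪k, n⟫` of the lattice points form a subgroup of `ℝ`. For `d ≥ 1` it is dense: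
were it cyclic, generated by `a`, then `n i = m i • a` with `m i ∈ ℤ`, and `m j • eᵢ - m i • eⱼ`
would be a lattice point on `Σ₀`, forcing `n i = 0`. Given `z ∈ Σ₀`, round it to a lattice point,
whose height is at most `√(d+1)`; subtracting the nearest integer multiple of a lattice point of
height in `(0, ρ)` brings the height below `ρ` at bounded cost, and the orthogonal projection of
the result onto `Σ₀` is `τ`. For `d = 0` the hyperplane is `{0}`. -/

/-- The lattice point of `ℤ^{d+1}` viewed in Euclidean space. -/
noncomputable def lattPt4 (d : ℕ) (k : Fin (d + 1) → ℤ) : EuclideanSpace ℝ (Fin (d + 1)) :=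
  (WithLp.equiv 2 (Fin (d + 1) → ℝ)).symm (fun i => (k i : ℝ))

noncomputable def intLattice (ι : Type*) [Fintype ι] : (ι → ℤ) →+ EuclideanSpace ℝ ι :=
  AddMonoidHom.mk' (fun k => WithLp.toLp 2 fun i => (k i : ℝ)) fun a b => by ext; simp

theorem coe_intLattice_fin (d : ℕ) : ⇑(intLattice (Fin (d + 1))) = lattPt4 d := rfl

theorem inner_intLattice_single {ι : Type*} [Fintype ι] [DecidableEq ι] (w : EuclideanSpace ℝ ι)
    (i : ι) : ⟪intLattice ι (Pi.single i 1), w⟫ = w i := by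
  simp [intLattice, PiLp.inner_apply, Pi.single_apply]

theorem dense_range_inner_intLattice {ι : Type*} [Fintype ι] [Nontrivial ι]
    (w : EuclideanSpace ℝ ι) (hw : ∀ k : ι → ℤ, ⟪intLattice ι k, w⟫ = 0 → k = 0) :
    Dense (Set.range fun k => ⟪intLattice ι k, w⟫) := by
  classical
  let φ : (ι → ℤ) →+ ℝ := (innerₛₗ ℝ w).toAddMonoidHom.comp (intLattice ι)
  have hφ : ∀ k, φ k = ⟪intLattice ι k, w⟫ := fun k => real_inner_comm (intLattice ι k) w
  have hrange : Set.range (fun k => ⟪intLattice ι k, w⟫) = φ.range := by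
    ext; simp [hφ]
  rw [hrange]
  refine φ.range.dense_or_cyclic.resolve_right ?_
  rintro ⟨a, ha⟩
  have hmul : ∀ i, ∃ m : ℤ, m • a = w i := fun i => by
    rw [← AddSubgroup.mem_closure_singleton, ← ha, ← inner_intLattice_single, ← hφ]
    exact AddMonoidHom.mem_range.mpr ⟨_, rfl⟩
  choose m hm using hmul
  obtain ⟨i, j, hij⟩ := exists_pair_ne ι
  -- `w i = m i • a` and `w j = m j • a`, so `m j • eᵢ - m i • eⱼ` is orthogonal to `w`.
  have hk : m j • Pi.single i 1 - m i • Pi.single j 1 = (0 : ι → ℤ) := by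
    refine hw _ ?_
    rw [← hφ, map_sub, map_zsmul, map_zsmul, hφ, hφ, inner_intLattice_single,
      inner_intLattice_single, ← hm, ← hm, smul_comm, sub_self]
  have hmi : m i = 0 := by simpa [hij.symm] using congr_fun hk j
  have hei : Pi.single i 1 = (0 : ι → ℤ) :=
    hw _ (by rw [inner_intLattice_single, ← hm, hmi, zero_smul])
  simpa using congr_fun hei i

theorem dist_intLattice_round_le {ι : Type*} [Fintype ι] (z : EuclideanSpace ℝ ι) :
    dist z (intLattice ι fun i => round (z i)) ≤ √(Fintype.card ι) := by
  rw [EuclideanSpace.dist_eq]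
  gcongr
  calc ∑ i, dist (z i) (intLattice ι (fun i => round (z i)) i) ^ 2 ≤ ∑ _i : ι, (1 : ℝ) := by
        gcongr with i
        change dist (z i) (round (z i) : ℝ) ^ 2 ≤ 1
        exact pow_le_one₀ dist_nonneg ((abs_sub_round (z i)).trans (by norm_num))
    _ = Fintype.card ι := by simp

section

variable {G E : Type*} [AddCommGroup G] [NormedAddCommGroup E] [InnerProductSpace ℝ E]

theorem eq_zero_of_inner_eq_zero_of_finrank_eq_one [FiniteDimensional ℝ E]
    (hE : Module.finrank ℝ E = 1) {n : E} (hn : n ≠ 0) {z : E} (hz : ⟪z, n⟫ = 0) : z = 0 := by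
  obtain ⟨c, rfl⟩ := (finrank_eq_one_iff_of_nonzero' n hn).mp hE z
  rw [real_inner_smul_left, mul_eq_zero] at hz
  rcases hz with hc | hnn
  · rw [hc, zero_smul]
  · exact absurd (inner_self_eq_zero.mp hnn) hn

/-- The step is the nearest integer multiple of a fixed `v` with `⟪g v, n⟫ ∈ (0, ρ)`. -/
theorem exists_abs_inner_le_of_dense_range (g : G →+ E) (n : E)
    (hdense : Dense (Set.range fun k => ⟪g k, n⟫)) {ρ : ℝ} (hρ : 0 < ρ) (T : ℝ) :
    ∃ K ≥ 0, ∀ k₀, |⟪g k₀, n⟫| ≤ T → ∃ k, |⟪g k, n⟫| ≤ ρ ∧ dist (g k) (g k₀) ≤ K := by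
  obtain ⟨_, ⟨v, rfl⟩, hs, hsρ⟩ := hdense.exists_between hρ
  set s := ⟪g v, n⟫
  replace hs : 0 < s := hs
  replace hsρ : s < ρ := hsρ
  refine ⟨(|T| / s + 1) * ‖g v‖, by positivity, fun k₀ hk₀ => ?_⟩
  set q := round (⟪g k₀, n⟫ / s)
  have hround : |⟪g k₀, n⟫ / s - q| ≤ 1 / 2 := abs_sub_round _
  refine ⟨k₀ - q • v, ?_, ?_⟩
  · calc |⟪g (k₀ - q • v), n⟫| = s * |⟪g k₀, n⟫ / s - q| := by
          rw [map_sub, map_zsmul, inner_sub_left, ← Int.cast_smul_eq_zsmul ℝ,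
            real_inner_smul_left, ← abs_of_pos hs, ← abs_mul, abs_of_pos hs, mul_sub, mul_div_cancel₀ _ hs.ne', mul_comm s]
      _ ≤ ρ := by nlinarith
  · have hq : |(q : ℝ)| ≤ |T| / s + 1 := by
      have : |⟪g k₀, n⟫ / s| ≤ |T| / s := by
        rw [abs_div, abs_of_pos hs]
        exact div_le_div_of_nonneg_right (hk₀.trans (le_abs_self T)) hs.le
      linarith [abs_sub_abs_le_abs_sub (q : ℝ) (⟪g k₀, n⟫ / s), abs_sub_comm (⟪g k₀, n⟫ / s) q]
    rw [dist_eq_norm, map_sub, map_zsmul, sub_sub_cancel_left, norm_neg, norm_zsmul ℝ,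
      Real.norm_eq_abs]
    gcongr

theorem exists_near_hyperplane_of_dense_range (g : G →+ E) {n : E} (hn : ‖n‖ = 1) {C : ℝ}
    (hC : ∀ z, ∃ k, dist z (g k) ≤ C) (hdense : Dense (Set.range fun k => ⟪g k, n⟫))
    (ρ : ℝ) (hρ : 0 < ρ) :
    ∃ R > 0, ∀ z : E, ⟪z, n⟫ = 0 → ∃ τ : E, ⟪τ, n⟫ = 0 ∧ dist τ z ≤ R ∧ ∃ k, dist τ (g k) ≤ ρ := by
  obtain ⟨K, hK, hmove⟩ := exists_abs_inner_le_of_dense_range g n hdense hρ C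
  have hC0 : 0 ≤ C := let ⟨_, h⟩ := hC 0; dist_nonneg.trans h
  refine ⟨ρ + K + C, by positivity, fun z hz => ?_⟩
  obtain ⟨k₀, hk₀⟩ := hC z
  have hheight : |⟪g k₀, n⟫| ≤ C := by
    calc |⟪g k₀, n⟫| = |⟪g k₀ - z, n⟫| := by rw [inner_sub_left, hz, sub_zero]
      _ ≤ ‖g k₀ - z‖ * ‖n‖ := abs_real_inner_le_norm _ _
      _ ≤ C := by rwa [hn, mul_one, ← dist_eq_norm, dist_comm]
  obtain ⟨k, hkρ, hkk₀⟩ := hmove k₀ hheight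
  have hτ : dist (g k - ⟪g k, n⟫ • n) (g k) = |⟪g k, n⟫| := by
    rw [dist_eq_norm, sub_sub_cancel_left, norm_neg, norm_smul, hn, mul_one, Real.norm_eq_abs]
  refine ⟨g k - ⟪g k, n⟫ • n, ?_, ?_, k, hτ.trans_le hkρ⟩
  · rw [inner_sub_left, real_inner_smul_left, real_inner_self_eq_norm_sq, hn]
    ring
  · calc _ ≤ dist (g k - ⟪g k, n⟫ • n) (g k) + dist (g k) (g k₀) + dist (g k₀) z :=
          dist_triangle4 _ _ _ _
      _ ≤ ρ + K + C := by rw [hτ, dist_comm (g k₀)]; gcongr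

end

theorem stmt_4 (d : ℕ) (n : EuclideanSpace ℝ (Fin (d + 1))) (hn : ‖n‖ = 1)
    (hirr : ∀ k : Fin (d + 1) → ℤ, ⟪lattPt4 d k, n⟫ = 0 → k = 0) :
    ∀ ρ > (0 : ℝ), ∃ R > (0 : ℝ), ∀ z : EuclideanSpace ℝ (Fin (d + 1)), ⟪z, n⟫ = 0 →
      ∃ τ : EuclideanSpace ℝ (Fin (d + 1)), ⟪τ, n⟫ = 0 ∧ dist τ z ≤ R ∧
        ∃ k : Fin (d + 1) → ℤ, dist τ (lattPt4 d k) ≤ ρ := by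
  intro ρ hρ
  rcases d with _ | d
  · have hn0 : n ≠ 0 := norm_ne_zero_iff.mp (by rw [hn]; exact one_ne_zero)
    refine ⟨ρ, hρ, fun z hz => ⟨0, inner_zero_left _, ?_, 0, ?_⟩⟩
    · rw [eq_zero_of_inner_eq_zero_of_finrank_eq_one (finrank_euclideanSpace_fin) hn0 hz,
        dist_self]
      exact hρ.le
    · rw [← coe_intLattice_fin, map_zero, dist_self]
      exact hρ.le
  · rw [← coe_intLattice_fin] at hirr ⊢
    exact exists_near_hyperplane_of_dense_range (intLattice (Fin (d + 2))) hn
      (fun z => ⟨_, dist_intLattice_round_le z⟩) (dense_range_inner_intLattice n hirr) ρ hρ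
end

section
/- Let $\mathcal{I}$ be an operator on bounded functions of $\Sigma_0$ satisfying the comparison principle and the constant-shift identity $\mathcal{I}(\phi + c, y) = \mathcal{I}(\phi, y) - c f^\varepsilon(y)$ with $\varepsilon c_1 \leq f^\varepsilon \leq \varepsilon c_2$, $0 < c_1 < c_2$. Suppose bounded functions $w_1, w_2$ satisfy $\mathcal{I}(w_1, y) \geq -b_1 + \frac{a_1 f^\varepsilon(y)}{\varepsilon} + g(y)$ and $\mathcal{I}(w_2, y) \leq \frac{a_2 f^\varepsilon(y)}{\varepsilon} + g(y)$ for all $y$, with $b_1 \geq 0$. Then $a_1 - a_2 - b_1 / c_1 \leq \varepsilon \sup_{\Sigma_0} |w_1 - w_2|$. -/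
section ComparisonShift

variable {X : Type*} (I : (X → ℝ) → X → ℝ) (f : X → ℝ)

/-- Comparing `v` with the shifted function `u - c`, whose image under `I` is `I u + c f`. -/
theorem sub_le_of_le_add_mul_of_comparison
    (hshift : ∀ (φ : X → ℝ) (c : ℝ) (y), I (fun x => φ x + c) y = I φ y - c * f y)
    (hcomp : ∀ u v : X → ℝ, (∃ M, ∀ y, |u y| ≤ M) → (∃ M, ∀ y, |v y| ≤ M) →
      (∀ y, I v y ≤ I u y) → ∀ y, u y ≤ v y)
    {u v : X → ℝ} (hu : ∃ M, ∀ y, |u y| ≤ M) (hv : ∃ M, ∀ y, |v y| ≤ M) (c : ℝ)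
    (h : ∀ y, I v y ≤ I u y + c * f y) (y : X) :
    u y - c ≤ v y := by
  obtain ⟨M, hM⟩ := hu
  have hbdd : ∃ B, ∀ y, |u y + -c| ≤ B :=
    ⟨M + |c|, fun y => (abs_add_le _ _).trans (by rw [abs_neg]; linarith [hM y])⟩
  have hle : ∀ y, I v y ≤ I (fun x => u x + -c) y := fun y => by
    rw [hshift]; linarith [h y]
  simpa [sub_eq_add_neg] using hcomp _ v hbdd hv hle y

end ComparisonShift

theorem stmt_7_general (d : ℕ) (ε c₁ c₂ a₁ a₂ b₁ S : ℝ) (hε : 0 < ε) (hc₁ : 0 < c₁)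
    (hb₁ : 0 ≤ b₁)
    (I : ((EuclideanSpace ℝ (Fin d)) → ℝ) → (EuclideanSpace ℝ (Fin d)) → ℝ)
    (f : EuclideanSpace ℝ (Fin d) → ℝ)
    (hf : ∀ y, ε * c₁ ≤ f y ∧ f y ≤ ε * c₂)
    (hshift : ∀ (φ : EuclideanSpace ℝ (Fin d) → ℝ) (c : ℝ) (y),
      I (fun x => φ x + c) y = I φ y - c * f y)
    (hcomp : ∀ u v : EuclideanSpace ℝ (Fin d) → ℝ,
      (∃ M, ∀ y, |u y| ≤ M) → (∃ M, ∀ y, |v y| ≤ M) →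
      (∀ y, I v y ≤ I u y) → ∀ y, u y ≤ v y)
    (g w₁ w₂ : EuclideanSpace ℝ (Fin d) → ℝ)
    (hw₁b : ∃ M, ∀ y, |w₁ y| ≤ M) (hw₂b : ∃ M, ∀ y, |w₂ y| ≤ M)
    (hw₁ : ∀ y, -b₁ + a₁ * f y / ε + g y ≤ I w₁ y)
    (hw₂ : ∀ y, I w₂ y ≤ a₂ * f y / ε + g y)
    (hS : ∀ y, |w₁ y - w₂ y| ≤ S) :
    a₁ - a₂ - b₁ / c₁ ≤ ε * S := by
  set c := b₁ / (c₁ * ε) - (a₁ - a₂) / ε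
  -- `f ≥ ε c₁` turns the defect `b₁` into a multiple of `f`.
  have hI : ∀ y, I w₂ y ≤ I w₁ y + c * f y := fun y => by
    have hb : b₁ ≤ b₁ / (c₁ * ε) * f y := by
      rw [div_mul_eq_mul_div, le_div_iff₀ (by positivity)]
      nlinarith [(hf y).1]
    have hc : c * f y = b₁ / (c₁ * ε) * f y - (a₁ * f y / ε - a₂ * f y / ε) := by
      simp only [c]; ring
    linarith [hw₁ y, hw₂ y]
  have hcS : -c ≤ S := by
    have h0 := sub_le_of_le_add_mul_of_comparison I f hshift hcomp hw₁b hw₂b c hI 0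
    linarith [(abs_le.mp (hS 0)).1]
  have hεc : ε * -c = a₁ - a₂ - b₁ / c₁ := by
    simp only [c]; field_simp; ring
  rw [← hεc]
  exact mul_le_mul_of_nonneg_left hcS hε.le

theorem stmt_7 (d : ℕ) (ε c₁ c₂ a₁ a₂ b₁ S : ℝ) (hε : 0 < ε) (hc₁ : 0 < c₁)
    (hc₁₂ : c₁ < c₂) (hb₁ : 0 ≤ b₁)
    (I : ((EuclideanSpace ℝ (Fin d)) → ℝ) → (EuclideanSpace ℝ (Fin d)) → ℝ)
    (f : EuclideanSpace ℝ (Fin d) → ℝ)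
    (hf : ∀ y, ε * c₁ ≤ f y ∧ f y ≤ ε * c₂)
    (hshift : ∀ (φ : EuclideanSpace ℝ (Fin d) → ℝ) (c : ℝ) (y),
      I (fun x => φ x + c) y = I φ y - c * f y)
    (hcomp : ∀ u v : EuclideanSpace ℝ (Fin d) → ℝ,
      (∃ M, ∀ y, |u y| ≤ M) → (∃ M, ∀ y, |v y| ≤ M) →
      (∀ y, I v y ≤ I u y) → ∀ y, u y ≤ v y)
    (g w₁ w₂ : EuclideanSpace ℝ (Fin d) → ℝ)
    (hgb : ∃ M, ∀ y, |g y| ≤ M)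
    (hw₁b : ∃ M, ∀ y, |w₁ y| ≤ M) (hw₂b : ∃ M, ∀ y, |w₂ y| ≤ M)
    (hw₁ : ∀ y, -b₁ + a₁ * f y / ε + g y ≤ I w₁ y)
    (hw₂ : ∀ y, I w₂ y ≤ a₂ * f y / ε + g y)
    (hS : ∀ y, |w₁ y - w₂ y| ≤ S) :
    a₁ - a₂ - b₁ / c₁ ≤ ε * S :=
  stmt_7_general d ε c₁ c₂ a₁ a₂ b₁ S hε hc₁ hb₁ I f hf hshift hcomp g w₁ w₂ hw₁b hw₂b hw₁ hw₂ hS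
end

section
/- Suppose $(w^\varepsilon)_{\varepsilon > 0}$ is a family of functions on $\mathbb{R}^d$ such that: (i) for every $\delta > 0$ there is $R_\delta > 0$ (independent of $\varepsilon$) such that every ball of radius $R_\delta$ contains a $C(\delta + \delta/\varepsilon)$-almost period of $w^\varepsilon$; (ii) the rescaled functions $v^\varepsilon(x) := \varepsilon w^\varepsilon(x/\varepsilon)$ are uniformly bounded and uniformly H\"older: $|v^\varepsilon(x) - v^\varepsilon(y)| \leq C|x - y|^\gamma$ for some $\gamma \in (0,1)$, $C$ independent of $\varepsilon$. Then $\|\varepsilon w^\varepsilon - \varepsilon w^\varepsilon(0)\|_{L^\infty(\mathbb{R}^d)} \to 0$ as $\varepsilon \to 0^+$. -/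
/-!
Fix `δ`. Shifting `x` by a nearby almost period `τ` (at distance `≤ R_δ`) costs
`ε · C(δ + δ/ε) = C(εδ + δ)` for `εw^ε`, and brings the point into the ball `B_{R_δ}`, on which
the oscillation of `εw^ε` is that of `v^ε` on `B_{εR_δ}`, hence at most `C(εR_δ)^γ` by Hölder
continuity. As `ε → 0` the total tends to `Cδ`, which is small.
-/

open Filter Topology

def IsAlmostPeriod {E : Type*} [Add E] (u : E → ℝ) (μ : ℝ) (τ : E) : Prop :=
  ∀ x, |u (x + τ) - u x| ≤ μ

theorem IsAlmostPeriod.const_mul {E : Type*} [Add E] {u : E → ℝ} {μ c : ℝ} {τ : E}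
    (h : IsAlmostPeriod u μ τ) (hc : 0 ≤ c) : IsAlmostPeriod (fun x => c * u x) (c * μ) τ :=
  fun x => by
    rw [← mul_sub, abs_mul, abs_of_nonneg hc]
    exact mul_le_mul_of_nonneg_left (h x) hc

theorem abs_sub_le_of_isAlmostPeriod {E : Type*} [SeminormedAddCommGroup E] {u : E → ℝ}
    {μ K R : ℝ} {x τ : E} (hτ : IsAlmostPeriod u μ τ) (hτx : dist τ x ≤ R)
    (hball : ∀ y, ‖y‖ ≤ R → |u y - u 0| ≤ K) : |u x - u 0| ≤ μ + K := by
  have hshift : |u x - u (x - τ)| ≤ μ := by simpa using hτ (x - τ)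
  have hnear : |u (x - τ) - u 0| ≤ K := hball _ (by rwa [← dist_eq_norm, dist_comm])
  calc |u x - u 0| = |(u x - u (x - τ)) + (u (x - τ) - u 0)| := by ring_nf
    _ ≤ μ + K := (abs_add_le _ _).trans (add_le_add hshift hnear)

theorem abs_sub_le_of_holder_rescale {E : Type*} [NormedAddCommGroup E] [NormedSpace ℝ E]
    {f g : E → ℝ} {ε C γ : ℝ} (hε : 0 < ε) (hfg : ∀ x, f x = g (ε⁻¹ • x))
    (hf : ∀ x y, |f x - f y| ≤ C * dist x y ^ γ) (y : E) :
    |g y - g 0| ≤ C * (ε * ‖y‖) ^ γ := by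
  have hy : g y = f (ε • y) := by rw [hfg, smul_smul, inv_mul_cancel₀ hε.ne', one_smul]
  have h0 : g 0 = f 0 := by rw [hfg, smul_zero]
  simpa [hy, h0, norm_smul, abs_of_pos hε] using hf (ε • y) 0

theorem eventually_almostPeriod_bound_lt {C γ δ R η : ℝ} (hγ : 0 < γ) (hCδ : C * δ < η) :
    ∀ᶠ ε in 𝓝[>] (0 : ℝ), C * (ε * δ + δ) + C * (ε * R) ^ γ < η := by
  have hcont : Continuous fun ε : ℝ => C * (ε * δ + δ) + C * (ε * R) ^ γ := by
    exact (continuous_const.mul ((continuous_id.mul continuous_const).add continuous_const)).add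
      (continuous_const.mul ((continuous_id.mul continuous_const).rpow_const fun _ => Or.inr hγ.le))
  have hlim := hcont.tendsto 0
  simp only [zero_mul, zero_add, Real.zero_rpow hγ.ne', mul_zero, add_zero] at hlim
  exact tendsto_nhdsWithin_of_tendsto_nhds hlim |>.eventually (gt_mem_nhds hCδ)

theorem stmt_8_general (d : ℕ) (C γ : ℝ) (hC : 0 < C) (hγ : 0 < γ)
    (w v : ℝ → EuclideanSpace ℝ (Fin d) → ℝ)
    (hv : ∀ ε > (0 : ℝ), ∀ x, v ε x = ε * w ε (ε⁻¹ • x))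
    (hap : ∀ δ > (0 : ℝ), ∃ R > (0 : ℝ), ∀ ε > (0 : ℝ),
      ∀ z : EuclideanSpace ℝ (Fin d), ∃ τ : EuclideanSpace ℝ (Fin d),
        dist τ z ≤ R ∧ ∀ x, |w ε (x + τ) - w ε x| ≤ C * (δ + δ / ε))
    (hHol : ∀ ε > (0 : ℝ), ∀ x y, |v ε x - v ε y| ≤ C * dist x y ^ γ) :
    ∀ η > (0 : ℝ), ∃ ε₀ > (0 : ℝ), ∀ ε, 0 < ε → ε < ε₀ →
      ∀ x, |ε * w ε x - ε * w ε 0| ≤ η := by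
  intro η hη
  obtain ⟨δ, hδ, hCδ⟩ : ∃ δ > 0, C * δ < η :=
    ⟨η / (2 * C), by positivity, by rw [show C * (η / (2 * C)) = η / 2 by field_simp]; linarith⟩
  obtain ⟨R, -, hRap⟩ := hap δ hδ
  obtain ⟨ε₀, hε₀, hsmall⟩ := mem_nhdsGT_iff_exists_Ioo_subset.1
    (eventually_almostPeriod_bound_lt (R := R) hγ hCδ)
  refine ⟨ε₀, hε₀, fun ε hε hεε₀ x => ?_⟩
  obtain ⟨τ, hτx, hτ⟩ := hRap ε hε x
  have hper := IsAlmostPeriod.const_mul hτ hε.le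
  rw [show ε * (C * (δ + δ / ε)) = C * (ε * δ + δ) by field_simp] at hper
  have hball : ∀ y, ‖y‖ ≤ R → |ε * w ε y - ε * w ε 0| ≤ C * (ε * R) ^ γ := fun y hy =>
    (abs_sub_le_of_holder_rescale (g := fun y => ε * w ε y) hε (hv ε hε) (hHol ε hε) y).trans
      (by gcongr)
  exact (abs_sub_le_of_isAlmostPeriod hper hτx hball).trans (hsmall ⟨hε, hεε₀⟩).le

theorem stmt_8 (d : ℕ) (C γ : ℝ) (hC : 0 < C) (hγ : 0 < γ) (hγ1 : γ < 1)
    (w v : ℝ → EuclideanSpace ℝ (Fin d) → ℝ)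
    (hv : ∀ ε > (0 : ℝ), ∀ x, v ε x = ε * w ε (ε⁻¹ • x))
    (hap : ∀ δ > (0 : ℝ), ∃ R > (0 : ℝ), ∀ ε > (0 : ℝ),
      ∀ z : EuclideanSpace ℝ (Fin d), ∃ τ : EuclideanSpace ℝ (Fin d),
        dist τ z ≤ R ∧ ∀ x, |w ε (x + τ) - w ε x| ≤ C * (δ + δ / ε))
    (hbd : ∃ M, ∀ ε > (0 : ℝ), ∀ x, |v ε x| ≤ M)
    (hHol : ∀ ε > (0 : ℝ), ∀ x y, |v ε x - v ε y| ≤ C * dist x y ^ γ) :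
    ∀ η > (0 : ℝ), ∃ ε₀ > (0 : ℝ), ∀ ε, 0 < ε → ε < ε₀ →
      ∀ x, |ε * w ε x - ε * w ε 0| ≤ η :=
  stmt_8_general d C γ hC hγ w v hv hap hHol
end
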